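/- For every t ∈ ℝ and every g ∈ SU(N) parametrized by Euler angles g = F_{SU(N)}(φ₁,…,φ_{N(N-1)/2}, ψ₁,…,ψ_{N(N-1)/2}, ω₁,…,ω_{N-1}), one has e^{tλ₃}·g = F_{SU(N)}(φ₁ + t, φ₂,…,φ_{N(N-1)/2}, ψ₁,…,ψ_{N(N-1)/2}, ω₁,…,ω_{N-1}) and g·e^{tλ_{N²-1}} = F_{SU(N)}(φ₁,…,φ_{N(N-1)/2}, ψ₁,…,ψ_{N(N-1)/2}, ω₁,…,ω_{N-2}, ω_{N-1} + t), where λ₃ = i(E₁₁ - E₂₂) and λ_{N²-1} = i(E_{N-1,N-1} - E_{N,N}). -/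

import Mathlib

open Complex Matrix NormedSpace

/-- The diagonal generator `λ_{k²-1} = i(E_{k-1,k-1} - E_{k,k})` (1-based `k`),
embedded as an `N×N` matrix. -/
def lamD (N k : ℕ) : Matrix (Fin N) (Fin N) ℂ :=
  Matrix.diagonal fun i =>
    if i.val = k - 2 then Complex.I else if i.val = k - 1 then -Complex.I else 0

/-- The rotation generator `λ_{k²-2} = E_{k-1,k} - E_{k,k-1}` (1-based `k`),
embedded as an `N×N` matrix. -/
def lamR (N k : ℕ) : Matrix (Fin N) (Fin N) ℂ := fun i j =>
  if i.val = k - 2 ∧ j.val = k - 1 then 1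
  else if i.val = k - 1 ∧ j.val = k - 2 then -1 else 0

/-- `A(k)(x,y) := e^{x λ_{k²-1}} e^{y λ_{k²-2}}`. -/
noncomputable def Amat (N k : ℕ) (x y : ℝ) : Matrix (Fin N) (Fin N) ℂ :=
  NormedSpace.exp ((x : ℂ) • lamD N k) * NormedSpace.exp ((y : ℂ) • lamR N k)

/-- The recursive Euler-angle parametrization `F_{SU(n)}` of `SU(n)`, realized inside
`N×N` matrices (the `SU(n)` factor occupying the upper-left block):
`F_{SU(n)}(φ,ψ,ω) = [∏_{k=2}^{n} A(k)(φ_{k-1},ψ_{k-1})] · F_{SU(n-1)}(shifted angles) ·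
e^{ω_{n-1} λ_{n²-1}}`, with `F_{SU(1)} ≡ 1`. -/
noncomputable def FSU (N : ℕ) : ℕ → (ℕ → ℝ) → (ℕ → ℝ) → (ℕ → ℝ) → Matrix (Fin N) (Fin N) ℂ
  | 0, _, _, _ => 1
  | 1, _, _, _ => 1
  | (n + 1), φ, ψ, ω =>
      (((List.range n).map fun k => Amat N (k + 2) (φ k) (ψ k)).prod)
        * FSU N n (fun j => φ (j + n)) (fun j => ψ (j + n)) ω
        * NormedSpace.exp ((ω (n - 1) : ℂ) • lamD N (n + 1))

/-! Both translations are absorbed by the neighbouring factor of the same one-parameter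
subgroup: `e^{tλ₃}` merges with the leftmost factor `e^{φ₁λ₃}` of `A(2)(φ₁,ψ₁)`, and
`e^{tλ_{N²-1}}` with the rightmost factor `e^{ω_{N-1}λ_{N²-1}}`, since `e^{aX} e^{bX} = e^{(a+b)X}`. -/

lemma Matrix.exp_smul_mul_exp_smul {𝕂 m : Type*} [RCLike 𝕂] [Fintype m] [DecidableEq m]
    (a b : 𝕂) (X : Matrix m m 𝕂) : exp (a • X) * exp (b • X) = exp ((a + b) • X) := by
  rw [← Matrix.exp_add_of_commute _ _ (((Commute.refl X).smul_left a).smul_right b), add_smul]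

lemma FSU_succ_succ (N n : ℕ) (φ ψ ω : ℕ → ℝ) :
    FSU N (n + 2) φ ψ ω =
      ((List.range (n + 1)).map fun k => Amat N (k + 2) (φ k) (ψ k)).prod
        * FSU N (n + 1) (fun j => φ (j + (n + 1))) (fun j => ψ (j + (n + 1))) ω
        * exp ((ω n : ℂ) • lamD N (n + 2)) := rfl

lemma FSU_congr_omega (N : ℕ) : ∀ (n : ℕ) (φ ψ ω ω' : ℕ → ℝ),
    (∀ j, j + 1 < n → ω j = ω' j) → FSU N n φ ψ ω = FSU N n φ ψ ω'
  | 0, _, _, _, _, _ => rfl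
  | 1, _, _, _, _, _ => rfl
  | (n + 2), φ, ψ, ω, ω', h => by
      rw [FSU_succ_succ, FSU_succ_succ,
        FSU_congr_omega N (n + 1) _ _ ω ω' (fun j hj => h j (by omega)), h n (by omega)]

lemma exp_smul_lamD_mul_Amat (N k : ℕ) (t x y : ℝ) :
    exp ((t : ℂ) • lamD N k) * Amat N k x y = Amat N k (x + t) y := by
  rw [Amat, Amat, ← mul_assoc, Matrix.exp_smul_mul_exp_smul, add_comm, Complex.ofReal_add]

lemma exp_smul_lamD_two_mul_FSU (N n : ℕ) (t : ℝ) (φ ψ ω : ℕ → ℝ) :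
    exp ((t : ℂ) • lamD N 2) * FSU N (n + 2) φ ψ ω
      = FSU N (n + 2) (Function.update φ 0 (φ 0 + t)) ψ ω := by
  have tail : (fun j => Function.update φ 0 (φ 0 + t) (j + (n + 1))) = fun j => φ (j + (n + 1)) :=
    funext fun j => Function.update_of_ne (by omega) _ _
  rw [FSU_succ_succ, FSU_succ_succ, tail, List.range_succ_eq_map]
  simp only [List.map_cons, List.prod_cons, List.map_map, Function.comp_def, zero_add,
    Function.update_self, ne_eq, Nat.succ_ne_zero, not_false_eq_true, Function.update_of_ne]
  rw [← mul_assoc, ← mul_assoc, ← mul_assoc, exp_smul_lamD_mul_Amat]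

lemma FSU_mul_exp_smul_lamD (N n : ℕ) (t : ℝ) (φ ψ ω : ℕ → ℝ) :
    FSU N (n + 2) φ ψ ω * exp ((t : ℂ) • lamD N (n + 2))
      = FSU N (n + 2) φ ψ (Function.update ω n (ω n + t)) := by
  rw [FSU_succ_succ, FSU_succ_succ, Function.update_self,
    FSU_congr_omega N (n + 1) _ _ (Function.update ω n (ω n + t)) ω
      (fun j hj => Function.update_of_ne (by omega) _ _),
    mul_assoc, Matrix.exp_smul_mul_exp_smul, Complex.ofReal_add]

/-- Translation of the first and last Euler angles: `e^{tλ₃}·F_{SU(N)}(φ,ψ,ω) =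
F_{SU(N)}(φ₁+t,…)` and `F_{SU(N)}(φ,ψ,ω)·e^{tλ_{N²-1}} = F_{SU(N)}(…,ω_{N-1}+t)`. -/
theorem FSU_translate (N : ℕ) (hN : 2 ≤ N) (t : ℝ) (φ ψ ω : ℕ → ℝ) :
    NormedSpace.exp ((t : ℂ) • lamD N 2) * FSU N N φ ψ ω
        = FSU N N (Function.update φ 0 (φ 0 + t)) ψ ω ∧
    FSU N N φ ψ ω * NormedSpace.exp ((t : ℂ) • lamD N N)
        = FSU N N φ ψ (Function.update ω (N - 2) (ω (N - 2) + t)) := by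
  obtain ⟨n, rfl⟩ : ∃ n, N = n + 2 := ⟨N - 2, by omega⟩
  exact ⟨exp_smul_lamD_two_mul_FSU _ n t φ ψ ω, FSU_mul_exp_smul_lamD _ n t φ ψ ω⟩
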